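/- arXiv:2512.17618 — 3 statements merged into one kernel-verified Lean document; each statement's English description precedes it below -/
import Mathlib

section
/- If an ensemble A = Σᵢ uᵢ·aᵢ (a finite formal linear combination over ℂ of continuous maps aᵢ : X → Y) satisfies A|_T = 0 for every subset T ⊆ X with at most r points (i.e., for every such T, Σ_{i : aᵢ|_T = ψ} uᵢ = 0 for each function ψ : T → Y), then the induced linear map A^{(r)} : C(Y)^{⊗r} → C(X)^{⊗r}, defined on pure tensors by f₁⊗⋯⊗f_r ↦ Σᵢ uᵢ (f₁∘aᵢ)⊗⋯⊗(f_r∘aᵢ), is the zero map. -/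
open scoped Classical

open scoped TensorProduct

/-!
Evaluating the tensor `∑ᵢ uᵢ • ⨂ⱼ (fⱼ ∘ aᵢ)` at a point `x : Fin r → X` gives
`∑ᵢ uᵢ ∏ⱼ fⱼ (aᵢ (xⱼ))`, which vanishes once the `i` are grouped by the restriction of `aᵢ`
to the at most `r` points `xⱼ`. The tensor lives in `⨂ V` for the finite-dimensional span `V` of
the `fⱼ ∘ aᵢ`. Point evaluations separate the points of `V`, hence span its dual, so their tensor
products span the dual of `⨂ V`, and a tensor killed by all of them is zero.
-/

open Finset in
theorem sum_mul_comp_eq_zero_of_restrict_eq_zero {X Y ι R : Type*} [Fintype ι]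
    [NonUnitalNonAssocSemiring R] {r : ℕ} {u : ι → R} {a : ι → X → Y}
    (h : ∀ T : Set X, T.Finite → T.ncard ≤ r → ∀ ψ : T → Y,
      (∑ i ∈ univ.filter (fun i => ∀ t : T, a i t = ψ t), u i) = 0)
    (x : Fin r → X) (F : (Fin r → Y) → R) :
    ∑ i, u i * F (a i ∘ x) = 0 := by
  let res : ι → Set.range x → Y := fun i t => a i t
  have hcard : (Set.range x).ncard ≤ r := by
    rw [← Nat.card_coe_set_eq]
    simpa using Nat.card_le_card_of_surjective _ (Set.rangeFactorization_surjective (f := x))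
  calc ∑ i, u i * F (a i ∘ x)
      = ∑ ψ ∈ univ.image res, ∑ i with res i = ψ, u i * F (res i ∘ Set.rangeFactorization x) := by
        rw [sum_fiberwise_of_maps_to fun i _ => mem_image_of_mem res (mem_univ i)]
        rfl
    _ = ∑ ψ ∈ univ.image res, (∑ i with res i = ψ, u i) * F (ψ ∘ Set.rangeFactorization x) := by
        simp only [sum_mul]
        exact sum_congr rfl fun ψ _ => sum_congr rfl fun i hi => by rw [(mem_filter.1 hi).2]
    _ = 0 := sum_eq_zero fun ψ _ => by
        have hψ : ∑ i with res i = ψ, u i = 0 := by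
          convert h _ (Set.finite_range x) hcard ψ using 3
          exact funext_iff
        rw [hψ, zero_mul]

theorem Module.span_range_eq_top_of_separating {K V γ : Type*} [Field K] [AddCommGroup V]
    [Module K V] [FiniteDimensional K V] {ℓ : γ → Module.Dual K V}
    (hℓ : ∀ v, (∀ c, ℓ c v = 0) → v = 0) :
    Submodule.span K (Set.range ℓ) = ⊤ :=
  Submodule.span_eq_top_of_ne_zero fun v hv => by
    obtain ⟨c, hc⟩ := not_forall.1 (mt (hℓ v) hv)
    exact ⟨ℓ c, Set.mem_range_self c, hc⟩

theorem PiTensorProduct.eq_zero_of_forall_dualDistrib_tprod {R ι : Type*} [CommRing R]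
    [Fintype ι] {M γ : ι → Type*} [∀ i, AddCommGroup (M i)] [∀ i, Module R (M i)]
    [∀ i, Module.Finite R (M i)] [∀ i, Module.Free R (M i)]
    {g : ⦃i : ι⦄ → γ i → Module.Dual R (M i)}
    (hg : ∀ i, Submodule.span R (Set.range (@g i)) = ⊤)
    {t : ⨂[R] i, M i} (ht : ∀ j : ∀ i, γ i, dualDistrib (tprod R fun i => g (j i)) t = 0) :
    t = 0 := by
  have := Module.Free.of_basis (Basis.piTensorProduct fun i => Module.Free.chooseBasis R (M i))
  have hflip : dualDistrib.flip t = 0 := ext_of_span_eq_top hg ht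
  refine (Module.forall_dual_apply_eq_zero_iff R t).1 fun φ => ?_
  obtain ⟨ψ, rfl⟩ := (dualDistribEquiv (R := R) (M := M) (ι := ι)).surjective φ
  exact LinearMap.congr_fun hflip ψ

theorem PiTensorProduct.sum_smul_tprod_eq_zero_of_separating {K M ι κ γ : Type*} [Field K]
    [AddCommGroup M] [Module K M] [Fintype ι] [Fintype κ] {ℓ : γ → Module.Dual K M}
    (hℓ : ∀ v, (∀ c, ℓ c v = 0) → v = 0) (u : ι → K) (m : ι → κ → M)
    (h : ∀ x : κ → γ, ∑ i, u i * ∏ j, ℓ (x j) (m i j) = 0) :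
    ∑ i, u i • tprod K (m i) = 0 := by
  let V := Submodule.span K (Set.range fun p : ι × κ => m p.1 p.2)
  have : FiniteDimensional K V := FiniteDimensional.span_of_finite K (Set.finite_range _)
  let g : ι → κ → V := fun i j => ⟨m i j, Submodule.subset_span ⟨(i, j), rfl⟩⟩
  have hspan : Submodule.span K (Set.range fun c => (ℓ c).domRestrict V) = ⊤ :=
    Module.span_range_eq_top_of_separating fun v hv => Subtype.ext (hℓ v hv)
  have hV : ∑ i, u i • tprod K (g i) = 0 := by
    refine eq_zero_of_forall_dualDistrib_tprod (fun _ => hspan) fun x => ?_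
    simp only [map_sum, map_smul, dualDistrib_apply, smul_eq_mul]
    exact h x
  have hM := congr(map (fun _ => V.subtype) $hV)
  simp only [map_sum, map_smul, map_tprod, map_zero] at hM
  exact hM

/-- If an ensemble `A = Σᵢ uᵢ·aᵢ` of continuous maps `X → Y` restricts to `0`
on every subset `T ⊆ X` with at most `r` points, then the induced map
`A^{(r)} : C(Y)^{⊗r} → C(X)^{⊗r}` is zero. -/
theorem ensemble_restriction_zero_implies_coherent
    (X Y : Type) [TopologicalSpace X] [TopologicalSpace Y]
    (r : ℕ) (ι : Type) [Fintype ι] (u : ι → ℂ) (a : ι → C(X, Y))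
    (hrestr : ∀ T : Set X, T.Finite → T.ncard ≤ r → ∀ ψ : T → Y,
      (∑ i ∈ Finset.univ.filter (fun i => ∀ t : T, a i t = ψ t), u i) = 0) :
    ∀ f : Fin r → C(Y, ℂ),
      (∑ i, u i • PiTensorProduct.tprod ℂ (fun j => (f j).comp (a i))) =
        (0 : ⨂[ℂ] _ : Fin r, C(X, ℂ)) := by
  intro f
  refine PiTensorProduct.sum_smul_tprod_eq_zero_of_separating
    (ℓ := fun x => (ContinuousMap.evalCLM ℂ x).toLinearMap) (fun v hv => ContinuousMap.ext hv)
    u _ fun x => ?_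
  exact sum_mul_comp_eq_zero_of_restrict_eq_zero hrestr x fun y => ∏ j, f j (y j)
end

section
/- Let p₁, p₂, … : X → X be functions on a set X such that each pₙ is idempotent, the pₙ pairwise commute under composition, and the sets Mov pₙ = {x ∈ X : pₙ(x) ≠ x} are pairwise disjoint. Let Z_{n+1} denote the ensemble Π_{i=1}^{n+1}(1−pᵢ) in the ℂ-linear span of maps X → X. Then for every subset T ⊆ X with at most n points, the restriction Z_{n+1}|_T = 0; consequently Z_{n+1} is n-coherent, i.e., Z_{n+1}^{(n)} = 0 as a map C(X)^{⊗n} → C(X)^{⊗n} when X is a topological space and the pᵢ are continuous. -/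
open scoped TensorProduct Classical

noncomputable section

/-- The ℂ-linear span `⟨Y^X⟩` of the set of continuous maps `X → Y` (ensembles). -/
abbrev Ens (X Y : Type) [TopologicalSpace X] [TopologicalSpace Y] : Type :=
  C(X, Y) →₀ ℂ

variable {X Y W : Type} [TopologicalSpace X] [TopologicalSpace Y] [TopologicalSpace W]

/-- The bilinear extension of composition of maps to ensembles. -/
def Ens.comp (B : Ens Y W) (A : Ens X Y) : Ens X W :=
  B.sum fun b v => A.sum fun a u => Finsupp.single (b.comp a) (v * u)

/-- The identity map `1` as an ensemble. -/
def Ens.one (X : Type) [TopologicalSpace X] : Ens X X :=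
  Finsupp.single (ContinuousMap.id X) 1

/-- A single continuous map viewed as an ensemble. -/
def Ens.of (a : C(X, Y)) : Ens X Y := Finsupp.single a 1

/-- The multilinear map underlying `A^{(r)}`, sending `(f₁,…,f_r)` to
`Σᵢ uᵢ (f₁∘aᵢ)⊗⋯⊗(f_r∘aᵢ)`. -/
def Ens.applM (A : Ens X Y) (r : ℕ) :
    MultilinearMap ℂ (fun _ : Fin r => C(Y, ℂ)) (⨂[ℂ] _ : Fin r, C(X, ℂ)) :=
  A.sum fun a u =>
    u • (PiTensorProduct.tprod ℂ (s := fun _ : Fin r => C(X, ℂ))).compLinearMap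
      (fun _ => (ContinuousMap.compRightAlgHom ℂ ℂ a).toLinearMap)

/-- The induced linear map `A^{(r)} : C(Y)^{⊗r} → C(X)^{⊗r}`. -/
def Ens.applL (A : Ens X Y) (r : ℕ) :
    (⨂[ℂ] _ : Fin r, C(Y, ℂ)) →ₗ[ℂ] ⨂[ℂ] _ : Fin r, C(X, ℂ) :=
  PiTensorProduct.lift (A.applM r)

/-- The restriction `A|_T` of an ensemble to a subset `T ⊆ X`, as an element of the
free ℂ-vector space on the set of maps `T → Y`. -/
def Ens.restr (A : Ens X Y) (T : Set X) : (T → Y) →₀ ℂ :=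
  A.sum fun a u => Finsupp.single (fun t : T => a t) u

/-- The ensemble `Zₙ = Π_{i=1}^{n}(1 − pᵢ)` built from a sequence of self-maps. -/
def Ens.Z (p : ℕ → C(X, X)) (n : ℕ) : Ens X X :=
  ((List.range n).map (fun i => Ens.one X - Ens.of (p (i + 1)))).foldr Ens.comp (Ens.one X)

/-- The ensemble `Tₙ = Σ_{i=1}^{n} Z̄_{i−1} hᵢ`. -/
def Ens.T (q : ℕ → C(Y, Y)) (h : ℕ → C(X, Y)) (n : ℕ) : Ens X Y :=
  ∑ i ∈ Finset.range n, Ens.comp (Ens.Z q i) (Ens.of (h (i + 1)))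

/-- A set of projections and twists connecting topological spaces `X` and `Y`. -/
structure ProjTwist (X Y : Type) [TopologicalSpace X] [TopologicalSpace Y] where
  p : ℕ → C(X, X)
  q : ℕ → C(Y, Y)
  h : ℕ → C(X, Y)
  hb : ℕ → C(Y, X)
  p_idem : ∀ n, (p n).comp (p n) = p n
  p_comm : ∀ i j, (p i).comp (p j) = (p j).comp (p i)
  q_idem : ∀ n, (q n).comp (q n) = q n
  q_comm : ∀ i j, (q i).comp (q j) = (q j).comp (q i)
  p_mov : ∀ i j, i ≠ j → Disjoint {x | p i x ≠ x} {x | p j x ≠ x}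
  q_mov : ∀ i j, i ≠ j → Disjoint {y | q i y ≠ y} {y | q j y ≠ y}
  qh : ∀ i j, (q j).comp (h i) = (h i).comp (p j)
  phb : ∀ i j, (p j).comp (hb i) = (hb i).comp (q j)
  hbh : ∀ i j, (hb j).comp (h i) = (p j).comp (p i)
  hhb : ∀ i j, (h i).comp (hb j) = (q i).comp (q j)

/-!
The factors `1 - pᵢ` of `Z_{n+1}` commute, so in any representation of ensembles `Z_{n+1}`
kills every vector fixed by a single `p_k` with `k ≤ n + 1`; it remains to find such a `k`
by pigeonhole. Restriction to `T` is the representation on the free vector space over maps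
`T → X`, where `Z_{n+1}|_T` is `Z_{n+1}` applied to the inclusion: a point of `T` lies in
at most one of the disjoint moved sets, so some `p_k` with `k ≤ n + 1` fixes `T` pointwise.
For `A ↦ A^{(n)}`, the operators `eᵢ = 1 - pᵢ^*` on `C(X)` are orthogonal idempotents.
Splitting every tensor factor along `e₁, …, e_{n+1}` and `1 - ∑ eᵢ` writes a pure tensor of
`n` factors as a sum of pure tensors, each of which involves at most `n` of the `eᵢ` and is
therefore fixed by `p_k^* ⊗ ⋯ ⊗ p_k^*` for a missing `k`.
-/

theorem Finset.exists_mem_disjoint_of_ncard_lt_card {α ι : Type*} {S : ι → Set α}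
    (hS : Pairwise fun i j => Disjoint (S i) (S j)) {T : Set α} (hT : T.Finite)
    {s : Finset ι} (hlt : T.ncard < s.card) : ∃ i ∈ s, Disjoint T (S i) := by
  by_contra! hmeet
  have hpick : ∀ i ∈ s, ∃ a ∈ T, a ∈ S i := fun i hi =>
    Set.not_disjoint_iff.mp (hmeet i hi)
  obtain ⟨i₀, hi₀⟩ : s.Nonempty := Finset.card_pos.mp (by omega)
  have : Nonempty α := ⟨(hpick i₀ hi₀).choose⟩
  choose! x hxT hxS using hpick
  have hinj : Set.InjOn x s := fun i hi j hj hij => by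
    by_contra hne
    exact Set.disjoint_left.mp (hS hne) (hxS i hi) (hij ▸ hxS j hj)
  have := Set.ncard_le_ncard_of_injOn x hxT hinj hT
  rw [Set.ncard_coe_finset] at this
  omega

theorem List.prod_eq_prod_erase_mul {M : Type*} [Monoid M] [DecidableEq M] {l : List M}
    (hl : ∀ x ∈ l, ∀ y ∈ l, Commute x y) {y : M} (hy : y ∈ l) :
    l.prod = (l.erase y).prod * y := by
  rw [← List.prod_erase_of_comm hy fun a ha b hb => hl a ha b hb]
  exact (Commute.list_prod_right _ _ fun z hz => hl y hy z (List.mem_of_mem_erase hz)).eq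

section OrthogonalIdempotents

variable {R V κ : Type*} [CommRing R] [AddCommGroup V] [Module R V] [Fintype κ]
  (e : κ → Module.End R V)

def withComplement : Option κ → Module.End R V := fun o => o.elim (1 - ∑ i, e i) e

theorem sum_withComplement : ∑ o, withComplement e o = 1 := by
  simp [withComplement, Fintype.sum_option]

variable {e}

theorem one_sub_mul_withComplement (he : ∀ i, IsIdempotentElem (e i))
    (horth : Pairwise fun i j => e i * e j = 0) {k : κ} {o : Option κ} (ho : o ≠ some k) :
    (1 - e k) * withComplement e o = withComplement e o := by
  cases o with
  | none =>
    have hsum : e k * ∑ i, e i = e k := by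
      rw [Finset.mul_sum, Finset.sum_eq_single k (fun i _ hik => horth (Ne.symm hik))
        (by simp), (he k).eq]
    simp only [withComplement, Option.elim_none, sub_mul, one_mul, mul_sub, mul_one, hsum]
    abel
  | some i =>
    have hik : k ≠ i := fun h => ho (h ▸ rfl)
    simp only [withComplement, Option.elim_some, sub_mul, one_mul, horth hik, sub_zero]

theorem PiTensorProduct.tprod_mem_iSup_eqLocus_map {c : κ → Module.End R V}
    (hc : ∀ i, IsIdempotentElem (c i)) (horth : Pairwise fun i j => (1 - c i) * (1 - c j) = 0)
    {n : ℕ} (hn : n < Fintype.card κ) (f : Fin n → V) :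
    PiTensorProduct.tprod R f
      ∈ ⨆ k, LinearMap.eqLocus (PiTensorProduct.map fun _ : Fin n => c k) LinearMap.id := by
  set e := fun i => 1 - c i
  have hf : f = fun j => ∑ o, withComplement e o (f j) := by
    simp only [← LinearMap.sum_apply, sum_withComplement, Module.End.one_apply]
  rw [hf, MultilinearMap.map_sum]
  refine Submodule.sum_mem _ fun τ _ => ?_
  obtain ⟨k, -, hk⟩ := Finset.exists_mem_disjoint_of_ncard_lt_card
    (S := fun k => {j | τ j = some k}) (fun k l hkl => Set.disjoint_left.mpr fun j hk hl =>
      hkl (Option.some_injective _ (hk.symm.trans hl))) Set.finite_univ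
    (s := Finset.univ) (by simpa using hn)
  refine Submodule.mem_iSup_of_mem k ?_
  rw [LinearMap.mem_eqLocus, PiTensorProduct.map_tprod, LinearMap.id_apply]
  congr 1
  funext j
  have hfix := one_sub_mul_withComplement (e := e) (fun i => (hc i).one_sub) horth
    (Set.disjoint_left.mp hk (Set.mem_univ j))
  rw [sub_sub_cancel] at hfix
  rw [← Module.End.mul_apply, hfix]

end OrthogonalIdempotents

namespace ContinuousMap

theorem isIdempotentElem_compRight {p : C(X, X)} (hp : p.comp p = p) :
    IsIdempotentElem (ContinuousMap.compRightAlgHom ℂ ℂ p).toLinearMap := by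
  ext f x
  simp [hp]

theorem one_sub_compRight_mul_one_sub_compRight_eq_zero {p q : C(X, X)} (hpq : p.comp q = q.comp p)
    (hmov : Disjoint {x | p x ≠ x} {x | q x ≠ x}) :
    (1 - (ContinuousMap.compRightAlgHom ℂ ℂ p).toLinearMap)
      * (1 - (ContinuousMap.compRightAlgHom ℂ ℂ q).toLinearMap) = 0 := by
  ext f x
  simp only [Module.End.mul_apply, LinearMap.sub_apply, Module.End.one_apply, map_sub,
    AlgHom.toLinearMap_apply, ContinuousMap.compRightAlgHom_apply, ContinuousMap.sub_apply,
    ContinuousMap.comp_apply, LinearMap.zero_apply, ContinuousMap.zero_apply]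
  by_cases hx : p x = x
  · rw [hx]; ring
  · have hqx : q x = x := not_not.mp fun h => Set.disjoint_left.mp hmov hx h
    rw [hqx, ← ContinuousMap.comp_apply q p, ← hpq, ContinuousMap.comp_apply, hqx]
    ring

end ContinuousMap

namespace Ens

section Representation

variable {R : Type*} [Ring R] [Algebra ℂ R] (φ : C(X, X) → R)

theorem linearCombination_comp (hφ : ∀ b a, φ (b.comp a) = φ b * φ a) (B A : Ens X X) :
    Finsupp.linearCombination ℂ φ (B.comp A)
      = Finsupp.linearCombination ℂ φ B * Finsupp.linearCombination ℂ φ A := by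
  rw [Ens.comp, map_finsuppSum, Finsupp.linearCombination_apply ℂ B, Finsupp.sum_mul]
  refine Finsupp.sum_congr fun b _ => ?_
  rw [map_finsuppSum, Finsupp.linearCombination_apply ℂ A, Finsupp.mul_sum]
  refine Finsupp.sum_congr fun a _ => ?_
  rw [Finsupp.linearCombination_single, hφ, smul_mul_smul_comm]

theorem linearCombination_Z (hφ₁ : φ (ContinuousMap.id X) = 1)
    (hφ : ∀ b a, φ (b.comp a) = φ b * φ a) (p : ℕ → C(X, X)) (m : ℕ) :
    Finsupp.linearCombination ℂ φ (Ens.Z p m)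
      = ((List.range m).map fun i => 1 - φ (p (i + 1))).prod := by
  rw [Ens.Z]
  induction (List.range m) with
  | nil => simp [Ens.one, hφ₁]
  | cons i l ih =>
    rw [List.map_cons, List.foldr_cons, linearCombination_comp φ hφ, ih]
    simp [Ens.one, Ens.of, hφ₁]

theorem linearCombination_Z_eq_mul (hφ₁ : φ (ContinuousMap.id X) = 1)
    (hφ : ∀ b a, φ (b.comp a) = φ b * φ a) {p : ℕ → C(X, X)}
    (hp : ∀ i j, (p i).comp (p j) = (p j).comp (p i)) {k m : ℕ} (hk : k < m) :
    ∃ r, Commute r (1 - φ (p (k + 1))) ∧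
      Finsupp.linearCombination ℂ φ (Ens.Z p m) = r * (1 - φ (p (k + 1))) := by
  set l := (List.range m).map fun i => 1 - φ (p (i + 1))
  have hl : ∀ x ∈ l, ∀ y ∈ l, Commute x y := by
    simp only [l, List.mem_map, forall_exists_index, and_imp]
    rintro _ i - rfl _ j - rfl
    refine (Commute.one_left _).sub_left ((Commute.one_right _).sub_right ?_)
    rw [Commute, SemiconjBy, ← hφ, ← hφ, hp]
  have hy : 1 - φ (p (k + 1)) ∈ l := List.mem_map.mpr ⟨k, List.mem_range.mpr hk, rfl⟩
  refine ⟨(l.erase (1 - φ (p (k + 1)))).prod, (Commute.list_prod_right _ _ fun z hz =>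
    hl _ hy z (List.mem_of_mem_erase hz)).symm, ?_⟩
  rw [linearCombination_Z φ hφ₁ hφ, List.prod_eq_prod_erase_mul hl hy]

end Representation

theorem restr_eq_linearCombination (A : Ens X Y) (T : Set X) :
    A.restr T = Finsupp.linearCombination ℂ
      (fun a : C(X, Y) => Finsupp.lmapDomain ℂ ℂ fun g : T → X => a ∘ g) A
      (Finsupp.single (fun t : T => (t : X)) 1) := by
  rw [Ens.restr, Finsupp.linearCombination_apply, LinearMap.finsupp_sum_apply]
  refine Finsupp.sum_congr fun a _ => ?_
  rw [LinearMap.smul_apply, Finsupp.lmapDomain_apply, Finsupp.mapDomain_single,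
    Finsupp.smul_single, smul_eq_mul, mul_one]
  rfl

theorem restr_Z_eq_zero {p : ℕ → C(X, X)} (hcomm : ∀ i j, (p i).comp (p j) = (p j).comp (p i))
    (hmov : ∀ i j, i ≠ j → Disjoint {x | p i x ≠ x} {x | p j x ≠ x}) {n : ℕ} {T : Set X}
    (hT : T.Finite) (hcard : T.ncard ≤ n) : (Ens.Z p (n + 1)).restr T = 0 := by
  obtain ⟨k, hk, hfix⟩ := Finset.exists_mem_disjoint_of_ncard_lt_card
    (S := fun i => {x | p (i + 1) x ≠ x}) (fun i j hij => hmov _ _ (by simpa using hij)) hT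
    (s := Finset.range (n + 1)) (by simpa using Nat.lt_succ_of_le hcard)
  obtain ⟨r, -, hr⟩ := linearCombination_Z_eq_mul
    (fun a : C(X, X) => Finsupp.lmapDomain ℂ ℂ fun g : T → X => a ∘ g)
    (Finsupp.lmapDomain_id ℂ ℂ)
    (fun b a => Finsupp.lmapDomain_comp ℂ ℂ (fun g : T → X => a ∘ g) (fun g => b ∘ g))
    hcomm (Finset.mem_range.mp hk)
  have hfixT : (fun t : T => p (k + 1) t) = fun t : T => (t : X) := by
    funext t
    by_contra h
    exact Set.disjoint_left.mp hfix t.2 h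
  rw [restr_eq_linearCombination, hr, Module.End.mul_apply, LinearMap.sub_apply,
    Finsupp.lmapDomain_apply, Finsupp.mapDomain_single]
  simp [Function.comp_def, hfixT]

theorem applL_eq_linearCombination (A : Ens X Y) (r : ℕ) :
    A.applL r = Finsupp.linearCombination ℂ (fun a : C(X, Y) => PiTensorProduct.map
      fun _ : Fin r => (ContinuousMap.compRightAlgHom ℂ ℂ a).toLinearMap) A := by
  ext f
  rw [LinearMap.compMultilinearMap_apply, LinearMap.compMultilinearMap_apply, Ens.applL,
    PiTensorProduct.lift.tprod, Ens.applM, Finsupp.linearCombination_apply,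
    Finsupp.sum, Finsupp.sum, sum_apply, LinearMap.sum_apply]
  refine Finset.sum_congr rfl fun a _ => ?_
  rw [smul_apply, LinearMap.smul_apply, PiTensorProduct.map_tprod,
    MultilinearMap.compLinearMap_apply]

theorem applL_of (a : C(X, Y)) (r : ℕ) :
    (Ens.of a).applL r = PiTensorProduct.map fun _ : Fin r =>
      (ContinuousMap.compRightAlgHom ℂ ℂ a).toLinearMap := by
  rw [applL_eq_linearCombination, Ens.of, Finsupp.linearCombination_single, one_smul]

theorem applL_of_id (r : ℕ) : (Ens.of (ContinuousMap.id X)).applL r = LinearMap.id := by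
  rw [applL_of]
  exact PiTensorProduct.map_id

theorem applL_of_comp (b : C(Y, W)) (a : C(X, Y)) (r : ℕ) :
    (Ens.of (b.comp a)).applL r = (Ens.of a).applL r ∘ₗ (Ens.of b).applL r := by
  rw [applL_of, applL_of, applL_of, ← PiTensorProduct.map_comp]
  rfl

theorem eqLocus_applL_of_le_ker_applL_Z {p : ℕ → C(X, X)}
    (hcomm : ∀ i j, (p i).comp (p j) = (p j).comp (p i)) {k m : ℕ} (hk : k < m) (n : ℕ) :
    LinearMap.eqLocus ((Ens.of (p (k + 1))).applL n) LinearMap.id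
      ≤ LinearMap.ker ((Ens.Z p m).applL n) := by
  -- instance search does not find the ring structure of `Module.End` without this hint
  let _ : AddCommGroup (⨂[ℂ] _ : Fin n, C(X, ℂ)) := inferInstance
  -- `A ↦ A^{(n)}` reverses composition: it represents ensembles in the opposite ring
  obtain ⟨r, hr, hZ⟩ := linearCombination_Z_eq_mul
    (fun a => MulOpposite.op ((Ens.of a).applL n : Module.End ℂ (⨂[ℂ] _ : Fin n, C(X, ℂ))))
    (by rw [applL_of_id]; rfl) (fun b a => by rw [applL_of_comp]; rfl) hcomm hk
  have hop : Finsupp.linearCombination ℂ (fun a => MulOpposite.op ((Ens.of a).applL n))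
      (Ens.Z p m) = MulOpposite.op ((Ens.Z p m).applL n) := by
    rw [applL_eq_linearCombination]
    simp only [← applL_of]
    exact (Finsupp.apply_linearCombination ℂ (MulOpposite.opLinearEquiv ℂ).toLinearMap _ _).symm
  have hfactor : (Ens.Z p m).applL n = r.unop * (1 - (Ens.of (p (k + 1))).applL n) := by
    rw [← MulOpposite.unop_op ((Ens.Z p m).applL n), ← hop, hZ, hr.eq]
    rfl
  intro t ht
  rw [LinearMap.mem_ker, hfactor, Module.End.mul_apply, LinearMap.sub_apply, Module.End.one_apply,
    LinearMap.mem_eqLocus.mp ht, LinearMap.id_apply, sub_self, map_zero]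

theorem applL_Z_eq_zero {p : ℕ → C(X, X)} (hidem : ∀ n, (p n).comp (p n) = p n)
    (hcomm : ∀ i j, (p i).comp (p j) = (p j).comp (p i))
    (hmov : ∀ i j, i ≠ j → Disjoint {x | p i x ≠ x} {x | p j x ≠ x}) (n : ℕ) :
    (Ens.Z p (n + 1)).applL n = 0 := by
  ext f
  have hmem := PiTensorProduct.tprod_mem_iSup_eqLocus_map
    (c := fun k : Fin (n + 1) => (ContinuousMap.compRightAlgHom ℂ ℂ (p (k + 1))).toLinearMap)
    (fun k => ContinuousMap.isIdempotentElem_compRight (hidem _))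
    (fun k l hkl => ContinuousMap.one_sub_compRight_mul_one_sub_compRight_eq_zero (hcomm _ _)
      (hmov _ _ (by simpa [Fin.val_inj] using hkl))) (by simp) f
  simp only [← applL_of] at hmem
  have hle := iSup_le fun k : Fin (n + 1) => eqLocus_applL_of_le_ker_applL_Z hcomm k.isLt n
  simpa using hle hmem

end Ens

/-- If `p₁, p₂, … : X → X` are idempotent, pairwise commuting, with pairwise
disjoint moved sets, then the ensemble `Z_{n+1} = Π_{i=1}^{n+1}(1−pᵢ)` restricts to `0` on
every subset of at most `n` points, and consequently `Z_{n+1}` is `n`-coherent: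
`Z_{n+1}^{(n)} = 0`. -/
theorem Z_coherent {X : Type} [TopologicalSpace X] (p : ℕ → C(X, X))
    (hidem : ∀ n, (p n).comp (p n) = p n)
    (hcomm : ∀ i j, (p i).comp (p j) = (p j).comp (p i))
    (hmov : ∀ i j, i ≠ j → Disjoint {x | p i x ≠ x} {x | p j x ≠ x})
    (n : ℕ) :
    (∀ T : Set X, T.Finite → T.ncard ≤ n → (Ens.Z p (n + 1)).restr T = 0) ∧
      (Ens.Z p (n + 1)).applL n = 0 :=
  ⟨fun _ hT hcard => Ens.restr_Z_eq_zero hcomm hmov hT hcard,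
    Ens.applL_Z_eq_zero hidem hcomm hmov n⟩
end
end

section
/- In the setting of projections and twists, the ensembles T̄_{n+1}T_{n+1} and T_{n+1}T̄_{n+1} induce the identity maps on C(X)^{⊗n} and C(Y)^{⊗n} respectively, i.e., (T̄_{n+1}T_{n+1})^{(n)} = id and (T_{n+1}T̄_{n+1})^{(n)} = id. -/
open scoped TensorProduct Classical

noncomputable section

variable {X Y W : Type} [TopologicalSpace X] [TopologicalSpace Y] [TopologicalSpace W]

/-!
`T̄ₘTₘ = 1 − Zₘ` follows by induction on `m` from the twist relations: every cross term of
`(T̄ₘ + Zₘh̄ₘ₊₁)(Tₘ + Z̄ₘhₘ₊₁)` contains a factor `Zₘpᵢ₊₁ = 0` with `i < m`, and the diagonal one is `Zₘpₘ₊₁ = Zₘ − Zₘ₊₁`.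

For `Zₙ₊₁^{(n)} = 0`, write `Dⱼf = f − f ∘ pⱼ`. Idempotence, commutation and disjointness of the
moved sets give `Dⱼf ∘ pᵢ = 0` if `i = j` and `= Dⱼf` otherwise, so each `f ∈ C(X)` splits as
`f = E₀f + Σⱼ Dⱼf` into components on which every `pᵢ` acts by `0` or `1`. On a pure tensor of
components, `(1 − pᵢ)^{(n)}` is the identity if some slot carries `Dᵢ` and zero otherwise; the
`n` slots cannot carry all of `D₁, …, Dₙ₊₁`.
-/

namespace Ens

variable {V : Type} [TopologicalSpace V]

lemma single_comp_single (b : C(Y, W)) (a : C(X, Y)) (v u : ℂ) :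
    Ens.comp (Finsupp.single b v) (Finsupp.single a u) = Finsupp.single (b.comp a) (v * u) := by
  simp [Ens.comp]

lemma zero_comp (A : Ens X Y) : Ens.comp (0 : Ens Y W) A = 0 :=
  Finsupp.sum_zero_index

lemma comp_zero (B : Ens Y W) : Ens.comp B (0 : Ens X Y) = 0 := by
  simp [Ens.comp]

lemma add_comp (B₁ B₂ : Ens Y W) (A : Ens X Y) :
    Ens.comp (B₁ + B₂) A = Ens.comp B₁ A + Ens.comp B₂ A := by
  unfold Ens.comp
  refine Finsupp.sum_add_index' (fun b => by simp) fun b v₁ v₂ => ?_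
  simp only [add_mul, Finsupp.single_add, Finsupp.sum_add]

lemma comp_add (B : Ens Y W) (A₁ A₂ : Ens X Y) :
    Ens.comp B (A₁ + A₂) = Ens.comp B A₁ + Ens.comp B A₂ := by
  unfold Ens.comp
  rw [← Finsupp.sum_add]
  refine Finsupp.sum_congr fun b _ => Finsupp.sum_add_index' (fun a => by simp) 
    fun a u₁ u₂ => ?_
  rw [mul_add, Finsupp.single_add]

lemma neg_comp (B : Ens Y W) (A : Ens X Y) : Ens.comp (-B) A = -Ens.comp B A :=
  eq_neg_of_add_eq_zero_left (by rw [← add_comp, neg_add_cancel, zero_comp])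

lemma comp_neg (B : Ens Y W) (A : Ens X Y) : Ens.comp B (-A) = -Ens.comp B A :=
  eq_neg_of_add_eq_zero_left (by rw [← comp_add, neg_add_cancel, comp_zero])

lemma sub_comp (B₁ B₂ : Ens Y W) (A : Ens X Y) :
    Ens.comp (B₁ - B₂) A = Ens.comp B₁ A - Ens.comp B₂ A := by
  rw [sub_eq_add_neg, add_comp, neg_comp, sub_eq_add_neg]

lemma comp_sub (B : Ens Y W) (A₁ A₂ : Ens X Y) :
    Ens.comp B (A₁ - A₂) = Ens.comp B A₁ - Ens.comp B A₂ := by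
  rw [sub_eq_add_neg, comp_add, comp_neg, sub_eq_add_neg]

lemma sum_comp {ι : Type*} (s : Finset ι) (B : ι → Ens Y W) (A : Ens X Y) :
    Ens.comp (∑ i ∈ s, B i) A = ∑ i ∈ s, Ens.comp (B i) A := by
  induction s using Finset.induction_on with
  | empty => simp only [Finset.sum_empty, zero_comp]
  | insert a s ha ih => rw [Finset.sum_insert ha, Finset.sum_insert ha, add_comp, ih]

lemma comp_sum {ι : Type*} (B : Ens Y W) (s : Finset ι) (A : ι → Ens X Y) :
    Ens.comp B (∑ i ∈ s, A i) = ∑ i ∈ s, Ens.comp B (A i) := by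
  induction s using Finset.induction_on with
  | empty => simp only [Finset.sum_empty, comp_zero]
  | insert a s ha ih => rw [Finset.sum_insert ha, Finset.sum_insert ha, comp_add, ih]

lemma comp_assoc (C : Ens W V) (B : Ens Y W) (A : Ens X Y) :
    Ens.comp (Ens.comp C B) A = Ens.comp C (Ens.comp B A) := by
  induction C using Finsupp.induction_linear with
  | zero => simp only [zero_comp]
  | add C₁ C₂ h₁ h₂ => rw [add_comp, add_comp, add_comp, h₁, h₂]
  | single c w =>
    induction B using Finsupp.induction_linear with
    | zero => simp only [zero_comp, comp_zero]
    | add B₁ B₂ h₁ h₂ => rw [comp_add, add_comp, add_comp, comp_add, h₁, h₂]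
    | single b v =>
      induction A using Finsupp.induction_linear with
      | zero => simp only [comp_zero]
      | add A₁ A₂ h₁ h₂ => rw [comp_add, comp_add, comp_add, h₁, h₂]
      | single a u =>
        simp only [single_comp_single, ContinuousMap.comp_assoc, mul_assoc]

lemma one_comp (A : Ens X Y) : Ens.comp (Ens.one Y) A = A := by
  induction A using Finsupp.induction_linear with
  | zero => exact comp_zero _
  | add A₁ A₂ h₁ h₂ => rw [comp_add, h₁, h₂]
  | single a u => rw [Ens.one, single_comp_single, ContinuousMap.id_comp, one_mul]

lemma comp_one (B : Ens X Y) : Ens.comp B (Ens.one X) = B := by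
  induction B using Finsupp.induction_linear with
  | zero => exact zero_comp _
  | add B₁ B₂ h₁ h₂ => rw [add_comp, h₁, h₂]
  | single b v => rw [Ens.one, single_comp_single, ContinuousMap.comp_id, mul_one]

lemma of_comp_of (b : C(Y, W)) (a : C(X, Y)) :
    Ens.comp (Ens.of b) (Ens.of a) = Ens.of (b.comp a) := by
  rw [Ens.of, Ens.of, single_comp_single, one_mul, Ens.of]

lemma one_sub_of_comp_of_comm {a b : C(X, X)} (h : a.comp b = b.comp a) :
    Ens.comp (Ens.one X - Ens.of a) (Ens.of b) = Ens.comp (Ens.of b) (Ens.one X - Ens.of a) := by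
  rw [sub_comp, comp_sub, one_comp, comp_one, of_comp_of, of_comp_of, h]

lemma Z_zero (p : ℕ → C(X, X)) : Ens.Z p 0 = Ens.one X := rfl

lemma Z_succ (p : ℕ → C(X, X)) (m : ℕ) :
    Ens.Z p (m + 1) = Ens.comp (Ens.Z p m) (Ens.one X - Ens.of (p (m + 1))) := by
  have foldr_eq (l : List (Ens X X)) (c : Ens X X) :
      l.foldr Ens.comp c = Ens.comp (l.foldr Ens.comp (Ens.one X)) c := by
    induction l with
    | nil => exact (one_comp c).symm
    | cons x l ih => rw [List.foldr_cons, List.foldr_cons, ih, comp_assoc]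
  rw [Ens.Z, List.range_succ, List.map_append, List.foldr_append, foldr_eq, List.map_singleton,
    List.foldr_cons, List.foldr_nil, comp_one, Ens.Z]

lemma T_succ (q : ℕ → C(Y, Y)) (h : ℕ → C(X, Y)) (m : ℕ) :
    Ens.T q h (m + 1) = Ens.T q h m + Ens.comp (Ens.Z q m) (Ens.of (h (m + 1))) :=
  Finset.sum_range_succ _ _

end Ens

def ProjTwist.symm (PT : ProjTwist X Y) : ProjTwist Y X where
  p := PT.q
  q := PT.p
  h := PT.hb
  hb := PT.h
  p_idem := PT.q_idem
  p_comm := PT.q_comm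
  q_idem := PT.p_idem
  q_comm := PT.p_comm
  p_mov := PT.q_mov
  q_mov := PT.p_mov
  qh := PT.phb
  phb := PT.qh
  hbh i j := PT.hhb j i
  hhb i j := PT.hbh j i

namespace ProjTwist

open Ens

variable (PT : ProjTwist X Y)

lemma of_hb_comp_Z (j m : ℕ) :
    Ens.comp (Ens.of (PT.hb j)) (Ens.Z PT.q m) = Ens.comp (Ens.Z PT.p m) (Ens.of (PT.hb j)) := by
  induction m with
  | zero => rw [Z_zero, Z_zero, comp_one, one_comp]
  | succ m ih =>
    rw [Z_succ, Z_succ, ← comp_assoc, ih, comp_assoc, comp_assoc, comp_sub, sub_comp, comp_one,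
      one_comp, of_comp_of, of_comp_of, PT.phb]

lemma Z_comp_of_comm (i m : ℕ) :
    Ens.comp (Ens.Z PT.p m) (Ens.of (PT.p i)) = Ens.comp (Ens.of (PT.p i)) (Ens.Z PT.p m) := by
  induction m with
  | zero => rw [Z_zero, comp_one, one_comp]
  | succ m ih =>
    rw [Z_succ, comp_assoc, one_sub_of_comp_of_comm (PT.p_comm _ _), ← comp_assoc, ih, comp_assoc]

lemma Z_comp_of_eq_zero {i m : ℕ} (him : i < m) :
    Ens.comp (Ens.Z PT.p m) (Ens.of (PT.p (i + 1))) = 0 := by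
  induction m with
  | zero => omega
  | succ m ih =>
    rw [Z_succ, comp_assoc]
    rcases Nat.lt_succ_iff_lt_or_eq.mp him with hlt | rfl
    · rw [one_sub_of_comp_of_comm (PT.p_comm _ _), ← comp_assoc, ih hlt, zero_comp]
    · rw [sub_comp, one_comp, of_comp_of, PT.p_idem, sub_self, comp_zero]

lemma Z_comp_self (m : ℕ) : Ens.comp (Ens.Z PT.p m) (Ens.Z PT.p m) = Ens.Z PT.p m := by
  induction m with
  | zero => rw [Z_zero, comp_one]
  | succ m ih =>
    have hcomm : Ens.comp (Ens.one X - Ens.of (PT.p (m + 1))) (Ens.Z PT.p m)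
        = Ens.comp (Ens.Z PT.p m) (Ens.one X - Ens.of (PT.p (m + 1))) := by
      rw [sub_comp, comp_sub, one_comp, comp_one, Z_comp_of_comm]
    have hidem : Ens.comp (Ens.one X - Ens.of (PT.p (m + 1))) (Ens.one X - Ens.of (PT.p (m + 1)))
        = Ens.one X - Ens.of (PT.p (m + 1)) := by
      rw [sub_comp, comp_sub, comp_sub, one_comp, one_comp, comp_one, of_comp_of, PT.p_idem,
        sub_self, sub_zero]
    rw [Z_succ, comp_assoc, ← comp_assoc (Ens.one X - _), hcomm, comp_assoc, hidem,
      ← comp_assoc, ih]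

lemma comp_hb_comp_Z_comp_h (B : Ens X X) (i j m : ℕ) :
    Ens.comp (Ens.comp B (Ens.of (PT.hb j))) (Ens.comp (Ens.Z PT.q m) (Ens.of (PT.h i)))
      = Ens.comp B (Ens.comp (Ens.Z PT.p m) (Ens.of ((PT.p j).comp (PT.p i)))) := by
  rw [comp_assoc, ← comp_assoc (Ens.of _), of_hb_comp_Z, comp_assoc, of_comp_of, PT.hbh]

lemma TbarT_eq_one_sub_Z (m : ℕ) :
    Ens.comp (Ens.T PT.p PT.hb m) (Ens.T PT.q PT.h m) = Ens.one X - Ens.Z PT.p m := by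
  induction m with
  | zero => rw [Ens.T, Finset.sum_range_zero, zero_comp, Z_zero, sub_self]
  | succ m ih =>
    have cross₁ : Ens.comp (Ens.T PT.p PT.hb m)
        (Ens.comp (Ens.Z PT.q m) (Ens.of (PT.h (m + 1)))) = 0 := by
      rw [Ens.T, sum_comp]
      refine Finset.sum_eq_zero fun i hi => ?_
      rw [comp_hb_comp_Z_comp_h, ← of_comp_of, ← comp_assoc (Ens.Z PT.p m),
        PT.Z_comp_of_eq_zero (Finset.mem_range.mp hi), zero_comp, comp_zero]
    have cross₂ : Ens.comp (Ens.comp (Ens.Z PT.p m) (Ens.of (PT.hb (m + 1))))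
        (Ens.T PT.q PT.h m) = 0 := by
      rw [Ens.T, comp_sum]
      refine Finset.sum_eq_zero fun j hj => ?_
      rw [comp_hb_comp_Z_comp_h, PT.p_comm, ← of_comp_of, ← comp_assoc (Ens.Z PT.p j),
        Z_comp_of_comm, ← comp_assoc (Ens.Z PT.p m), ← comp_assoc (Ens.Z PT.p m),
        PT.Z_comp_of_eq_zero (Finset.mem_range.mp hj), zero_comp, zero_comp]
    have diag : Ens.comp (Ens.comp (Ens.Z PT.p m) (Ens.of (PT.hb (m + 1))))
        (Ens.comp (Ens.Z PT.q m) (Ens.of (PT.h (m + 1)))) = Ens.Z PT.p m - Ens.Z PT.p (m + 1) := by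
      rw [comp_hb_comp_Z_comp_h, PT.p_idem, ← comp_assoc, Z_comp_self, Z_succ, comp_sub,
        comp_one]
      abel
    rw [T_succ, T_succ, comp_add, add_comp, add_comp, ih, cross₁, cross₂, diag]
    abel

lemma TTbar_eq_one_sub_Zbar (m : ℕ) :
    Ens.comp (Ens.T PT.q PT.h m) (Ens.T PT.p PT.hb m) = Ens.one Y - Ens.Z PT.q m :=
  PT.symm.TbarT_eq_one_sub_Z m

end ProjTwist

/-- Without this instance, instance search finds no subtraction on maps into a tensor power. -/
instance (r : ℕ) : AddCommGroup (⨂[ℂ] _ : Fin r, C(X, ℂ)) := inferInstance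

namespace Ens

open PiTensorProduct

lemma applM_eq_linearCombination (A : Ens X Y) (r : ℕ) :
    A.applM r = Finsupp.linearCombination ℂ (fun a : C(X, Y) =>
      (tprod ℂ (s := fun _ : Fin r => C(X, ℂ))).compLinearMap
        fun _ => (ContinuousMap.compRightAlgHom ℂ ℂ a).toLinearMap) A :=
  (Finsupp.linearCombination_apply _ _).symm

lemma applL_zero (r : ℕ) : (0 : Ens X Y).applL r = 0 := by
  rw [Ens.applL, applM_eq_linearCombination, map_zero, map_zero]

lemma applL_add (A B : Ens X Y) (r : ℕ) : (A + B).applL r = A.applL r + B.applL r := by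
  simp only [Ens.applL, applM_eq_linearCombination, map_add]

lemma applL_sub (A B : Ens X Y) (r : ℕ) : (A - B).applL r = A.applL r - B.applL r := by
  simp only [Ens.applL, applM_eq_linearCombination, map_sub]

lemma applL_single_tprod (a : C(X, Y)) (u : ℂ) (r : ℕ) (f : Fin r → C(Y, ℂ)) :
    Ens.applL (Finsupp.single a u) r (tprod ℂ f) = u • tprod ℂ fun k => (f k).comp a := by
  rw [Ens.applL, lift.tprod, Ens.applM, Finsupp.sum_single_index (by simp)]
  rfl

lemma applL_of_tprod (a : C(X, Y)) (r : ℕ) (f : Fin r → C(Y, ℂ)) :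
    (Ens.of a).applL r (tprod ℂ f) = tprod ℂ fun k => (f k).comp a := by
  rw [Ens.of, applL_single_tprod, one_smul]

lemma one_applL (r : ℕ) : (Ens.one X).applL r = LinearMap.id := by
  refine ext (MultilinearMap.ext fun f => ?_)
  simp only [LinearMap.compMultilinearMap_apply, LinearMap.id_apply]
  rw [Ens.one, applL_single_tprod, one_smul]
  rfl

lemma applL_comp (B : Ens Y W) (A : Ens X Y) (r : ℕ) :
    (Ens.comp B A).applL r = A.applL r ∘ₗ B.applL r := by
  induction B using Finsupp.induction_linear with
  | zero => rw [zero_comp, applL_zero, applL_zero, LinearMap.comp_zero]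
  | add B₁ B₂ h₁ h₂ => rw [add_comp, applL_add, applL_add, h₁, h₂, LinearMap.comp_add]
  | single b v =>
    induction A using Finsupp.induction_linear with
    | zero => rw [comp_zero, applL_zero, applL_zero, LinearMap.zero_comp]
    | add A₁ A₂ h₁ h₂ => rw [comp_add, applL_add, applL_add, h₁, h₂, LinearMap.add_comp]
    | single a u =>
      refine ext (MultilinearMap.ext fun f => ?_)
      simp only [LinearMap.compMultilinearMap_apply, LinearMap.comp_apply]
      rw [single_comp_single, applL_single_tprod, applL_single_tprod, map_smul,
        applL_single_tprod, smul_smul, mul_comm]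
      rfl

lemma applL_one_sub_of_tprod {n : ℕ} (a : C(X, X)) (v : Fin n → C(X, ℂ)) (J : Fin n → ℕ)
    (i : ℕ) (hv : ∀ k, (v k).comp a = if J k = i then 0 else v k) :
    (Ens.one X - Ens.of a).applL n (tprod ℂ v) = if ∃ k, J k = i then tprod ℂ v else 0 := by
  rw [applL_sub, one_applL, LinearMap.sub_apply, LinearMap.id_apply, applL_of_tprod]
  split_ifs with h
  · obtain ⟨k, hk⟩ := h
    have hk : (v k).comp a = 0 := by rw [hv, if_pos hk]
    rw [MultilinearMap.map_coord_zero (tprod ℂ) (m := fun k => (v k).comp a) k hk, sub_zero]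
  · push Not at h
    simp only [hv, h, if_false, sub_self]

end Ens

section Coherence

open PiTensorProduct

def diffComp (a : C(X, X)) (f : C(X, ℂ)) : C(X, ℂ) := f - f.comp a

lemma diffComp_comp_self {a : C(X, X)} (ha : a.comp a = a) (f : C(X, ℂ)) :
    (diffComp a f).comp a = 0 := by
  rw [diffComp, ContinuousMap.sub_comp, ContinuousMap.comp_assoc, ha, sub_self]

lemma diffComp_comp_of_disjoint {a b : C(X, X)} (hab : a.comp b = b.comp a)
    (hmov : Disjoint {x | a x ≠ x} {x | b x ≠ x}) (f : C(X, ℂ)) :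
    (diffComp b f).comp a = diffComp b f := by
  ext x
  simp only [diffComp, ContinuousMap.comp_apply, ContinuousMap.sub_apply]
  by_cases hx : a x = x
  · rw [hx]
  · have hbx : b x = x := of_not_not (Set.disjoint_left.mp hmov hx)
    have hbax : b (a x) = a x := by
      rw [← ContinuousMap.comp_apply b a, ← hab, ContinuousMap.comp_apply, hbx]
    rw [hbx, hbax, sub_self, sub_self]

variable {p : ℕ → C(X, X)}

/-- The splitting `f = E₀f + Σ_{j=1}^{m} Dⱼf`: index `0` carries `E₀f`, which is fixed by
`p₁, …, pₘ`, and index `j ≥ 1` carries `Dⱼf`. -/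
def component (p : ℕ → C(X, X)) (m : ℕ) (f : C(X, ℂ)) : ℕ → C(X, ℂ)
  | 0 => f - ∑ j ∈ Finset.range m, diffComp (p (j + 1)) f
  | j + 1 => diffComp (p (j + 1)) f

lemma sum_component (p : ℕ → C(X, X)) (m : ℕ) (f : C(X, ℂ)) :
    ∑ k ∈ Finset.range (m + 1), component p m f k = f := by
  rw [Finset.sum_range_succ', component]
  exact add_sub_cancel _ f

lemma component_comp (hidem : ∀ i, (p i).comp (p i) = p i)
    (hcomm : ∀ i j, (p i).comp (p j) = (p j).comp (p i))
    (hmov : ∀ i j, i ≠ j → Disjoint {x | p i x ≠ x} {x | p j x ≠ x})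
    {m i : ℕ} (hi : i < m) (f : C(X, ℂ)) (k : ℕ) :
    (component p m f k).comp (p (i + 1)) = if k = i + 1 then 0 else component p m f k := by
  have diff_comp (j : ℕ) : (diffComp (p (j + 1)) f).comp (p (i + 1))
      = if j + 1 = i + 1 then 0 else diffComp (p (j + 1)) f := by
    split_ifs with hj
    · rw [hj, diffComp_comp_self (hidem _)]
    · exact diffComp_comp_of_disjoint (hcomm _ _) (hmov _ _ (Ne.symm hj)) f
  cases k with
  | succ j => exact diff_comp j
  | zero =>
    have lin (g : C(X, ℂ)) :
        g.comp (p (i + 1)) = ContinuousMap.compRightAlgHom ℂ ℂ (p (i + 1)) g := rfl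
    have sum_diff_comp : ∑ j ∈ Finset.range m, (diffComp (p (j + 1)) f).comp (p (i + 1))
        = ∑ j ∈ Finset.range m, diffComp (p (j + 1)) f - diffComp (p (i + 1)) f := by
      simp only [diff_comp, add_left_inj]
      have single := Finset.sum_ite_eq' (Finset.range m) i fun j => diffComp (p (j + 1)) f
      rw [if_pos (Finset.mem_range.mpr hi)] at single
      rw [eq_sub_iff_add_eq, ← single, ← Finset.sum_add_distrib]
      exact Finset.sum_congr rfl fun j _ => by split_ifs <;> simp
    rw [if_neg (Nat.zero_ne_add_one i), component, lin, map_sub, map_sum]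
    simp only [← lin]
    rw [sum_diff_comp, diffComp]
    abel

lemma applL_Z_tprod {n : ℕ} (v : Fin n → C(X, ℂ)) (J : Fin n → ℕ) (m : ℕ)
    (hv : ∀ i < m, ∀ k, (v k).comp (p (i + 1)) = if J k = i + 1 then 0 else v k) :
    (Ens.Z p m).applL n (tprod ℂ v) =
      if ∀ i < m, ∃ k, J k = i + 1 then tprod ℂ v else 0 := by
  induction m with
  | zero => rw [Ens.Z_zero, Ens.one_applL, LinearMap.id_apply, if_pos (by simp)]
  | succ m ih =>
    rw [Ens.Z_succ, Ens.applL_comp, LinearMap.comp_apply,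
      ih fun i hi => hv i (Nat.lt_succ_of_lt hi)]
    have last := Ens.applL_one_sub_of_tprod _ v J _ (hv m m.lt_succ_self)
    split_ifs with hprev hall hall
    · rw [last, if_pos (hall m m.lt_succ_self)]
    · rw [last, if_neg]
      exact fun hm => hall fun i hi =>
        (Nat.lt_succ_iff_lt_or_eq.mp hi).elim (hprev i) fun h => h ▸ hm
    · exact absurd (fun i hi => hall i (Nat.lt_succ_of_lt hi)) hprev
    · exact map_zero _

lemma not_forall_lt_succ_exists_eq (n : ℕ) (J : Fin n → ℕ) :
    ¬ ∀ i < n + 1, ∃ k, J k = i + 1 := by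
  intro h
  choose g hg using fun i : Fin (n + 1) => h i i.isLt
  have hinj : Function.Injective g := fun i i' hii' =>
    Fin.ext (Nat.succ_injective ((hg i).symm.trans (hii' ▸ hg i')))
  simpa using Fintype.card_le_of_injective g hinj

lemma Z_applL_eq_zero (hidem : ∀ i, (p i).comp (p i) = p i)
    (hcomm : ∀ i j, (p i).comp (p j) = (p j).comp (p i))
    (hmov : ∀ i j, i ≠ j → Disjoint {x | p i x ≠ x} {x | p j x ≠ x}) (n : ℕ) :
    (Ens.Z p (n + 1)).applL n = 0 := by
  refine ext (MultilinearMap.ext fun f => ?_)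
  simp only [LinearMap.compMultilinearMap_apply, LinearMap.zero_apply]
  have expand : tprod ℂ f = ∑ J ∈ Fintype.piFinset fun _ => Finset.range (n + 2),
      tprod ℂ fun k => component p (n + 1) (f k) (J k) := by
    conv_lhs => rw [← funext fun k => sum_component p (n + 1) (f k)]
    exact MultilinearMap.map_sum_finset _ _ _
  rw [expand, map_sum]
  refine Finset.sum_eq_zero fun J _ => ?_
  rw [applL_Z_tprod _ J _
    fun i hi k => component_comp hidem hcomm hmov hi (f k) (J k),
    if_neg (not_forall_lt_succ_exists_eq n J)]

end Coherence

/-- In the setting of projections and twists, the ensembles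
`T̄_{n+1}T_{n+1}` and `T_{n+1}T̄_{n+1}` induce the identity maps on `C(X)^{⊗n}` and
`C(Y)^{⊗n}` respectively. -/
theorem TbarT_induces_identity {X Y : Type} [TopologicalSpace X] [TopologicalSpace Y]
    (PT : ProjTwist X Y) (n : ℕ) :
    ((Ens.T PT.p PT.hb (n + 1)).comp (Ens.T PT.q PT.h (n + 1))).applL n = LinearMap.id ∧
    ((Ens.T PT.q PT.h (n + 1)).comp (Ens.T PT.p PT.hb (n + 1))).applL n = LinearMap.id := by
  constructor
  · rw [PT.TbarT_eq_one_sub_Z, Ens.applL_sub, Ens.one_applL,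
      Z_applL_eq_zero PT.p_idem PT.p_comm PT.p_mov, sub_zero]
  · rw [PT.TTbar_eq_one_sub_Zbar, Ens.applL_sub, Ens.one_applL,
      Z_applL_eq_zero PT.q_idem PT.q_comm PT.q_mov, sub_zero]
end
end
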